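/- arXiv:1905.09436 — 2 statements merged into one kernel-verified Lean document; each statement's English description precedes it below -/
import Mathlib

section
/- Let ℓ : Θ × 𝒟ⁿ → ℝ be a collection of measurable functions with finite sensitivity Δ, i.e., |ℓ(θ,D) − ℓ(θ,D')| ≤ Δ for all adjacent D, D' and ν-almost all θ. Suppose ∫ exp(−(ε/(2Δ)) ℓ(θ,D)) dν(θ) is finite and positive for all D. Then the family of probability measures μ_D with density f_D(θ) ∝ exp(−(ε/(2Δ)) ℓ(θ,D)) with respect to ν satisfies ε-differential privacy: for every measurable set B and all adjacent D, D', μ_D(B) ≤ exp(ε) · μ_{D'}(B). -/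
open MeasureTheory Real

/-!
Write `c = ε / (2Δ)`. Sensitivity `Δ` makes the Gibbs weights `exp (-c ℓ(·, D))` and
`exp (-c ℓ(·, D'))` agree up to a factor `exp (c Δ) = exp (ε / 2)` in both directions, a.e.
One direction bounds the unnormalised density of `μ D` by that of `μ D'`; integrating the other
bounds the normalising constant `Z D'` by `exp (ε / 2) Z D`. The two factors multiply to `exp ε`.
-/

lemma exp_neg_mul_le_exp_mul_mul_exp_neg_mul {c Δ a b : ℝ} (hc : 0 ≤ c) (hab : |a - b| ≤ Δ) :
    exp (-c * a) ≤ exp (c * Δ) * exp (-c * b) := by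
  rw [← exp_add, exp_le_exp]
  have : c * (b - a) ≤ c * Δ :=
    mul_le_mul_of_nonneg_left ((neg_sub a b ▸ neg_le_abs (a - b)).trans hab) hc
  linarith

lemma div_le_mul_mul_div_of_le_mul {x y X Y K : ℝ} (hX : 0 < X) (hY : 0 < Y) (hK : 0 ≤ K)
    (hy : 0 ≤ y) (hxy : x ≤ K * y) (hYX : Y ≤ K * X) :
    x / X ≤ K * K * (y / Y) := by
  rw [div_le_iff₀ hX]
  calc x ≤ K * y := hxy
    _ = K * (y / Y) * Y := by field_simp
    _ ≤ K * (y / Y) * (K * X) := by gcongr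
    _ = K * K * (y / Y) * X := by ring

section NormalizedDensity

variable {Θ : Type*} [MeasurableSpace Θ] {ν : Measure Θ}

theorem withDensity_ofReal_div_integral_le_smul {f g : Θ → ℝ} {K : ℝ} (hK : 0 ≤ K)
    (hf : Integrable f ν) (hg : Integrable g ν) (hf_pos : 0 < ∫ θ, f θ ∂ν)
    (hg_pos : 0 < ∫ θ, g θ ∂ν) (hg_nonneg : 0 ≤ᵐ[ν] g)
    (hfg : ∀ᵐ θ ∂ν, f θ ≤ K * g θ) (hgf : ∀ᵐ θ ∂ν, g θ ≤ K * f θ) :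
    ν.withDensity (fun θ => ENNReal.ofReal (f θ / ∫ θ, f θ ∂ν)) ≤
      ENNReal.ofReal (K * K) • ν.withDensity (fun θ => ENNReal.ofReal (g θ / ∫ θ, g θ ∂ν)) := by
  have hZ : ∫ θ, g θ ∂ν ≤ K * ∫ θ, f θ ∂ν := by
    rw [← integral_const_mul]
    exact integral_mono_ae hg (hf.const_mul K) hgf
  rw [← withDensity_smul' _ _ ENNReal.ofReal_ne_top]
  refine withDensity_mono ?_
  filter_upwards [hfg, hg_nonneg] with θ hfgθ hgθ
  rw [Pi.smul_apply, smul_eq_mul, ← ENNReal.ofReal_mul (by positivity)]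
  exact ENNReal.ofReal_le_ofReal
    (div_le_mul_mul_div_of_le_mul hf_pos hg_pos hK hgθ hfgθ hZ)

end NormalizedDensity

theorem exponential_mechanism_DP_general
    {Θ : Type*} [MeasurableSpace Θ] (ν : Measure Θ)
    {𝒟 : Type*} [DecidableEq 𝒟] {n : ℕ}
    (ℓ : Θ → (Fin n → 𝒟) → ℝ)
    (ε Δ : ℝ) (hε : 0 < ε) (hΔ : 0 < Δ)
    (hsens : ∀ D D' : Fin n → 𝒟, hammingDist D D' = 1 →
      ∀ᵐ θ ∂ν, |ℓ θ D - ℓ θ D'| ≤ Δ)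
    (Z : (Fin n → 𝒟) → ℝ)
    (hZ : ∀ D, Z D = ∫ θ, exp (-(ε / (2 * Δ)) * ℓ θ D) ∂ν)
    (hZint : ∀ D, Integrable (fun θ => exp (-(ε / (2 * Δ)) * ℓ θ D)) ν)
    (hZpos : ∀ D, 0 < Z D)
    (μ : (Fin n → 𝒟) → Measure Θ)
    (hμ : ∀ D, μ D = ν.withDensity
      (fun θ => ENNReal.ofReal (exp (-(ε / (2 * Δ)) * ℓ θ D) / Z D))) :
    ∀ D D' : Fin n → 𝒟, hammingDist D D' = 1 →
      ∀ B : Set Θ, MeasurableSet B →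
        μ D B ≤ ENNReal.ofReal (exp ε) * μ D' B := by
  intro D D' hadj B _
  have hc : 0 ≤ ε / (2 * Δ) := by positivity
  have hcΔ : ε / (2 * Δ) * Δ = ε / 2 := by field_simp
  have hweight : ∀ D D', hammingDist D D' = 1 → ∀ᵐ θ ∂ν,
      exp (-(ε / (2 * Δ)) * ℓ θ D) ≤ exp (ε / 2) * exp (-(ε / (2 * Δ)) * ℓ θ D') := by
    intro D D' hadj
    filter_upwards [hsens D D' hadj] with θ hθ
    exact hcΔ ▸ exp_neg_mul_le_exp_mul_mul_exp_neg_mul hc hθ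
  have hle := withDensity_ofReal_div_integral_le_smul (exp_nonneg _) (hZint D) (hZint D')
    (hZ D ▸ hZpos D) (hZ D' ▸ hZpos D') (ae_of_all _ fun θ => (exp_pos _).le)
    (hweight D D' hadj) (hweight D' D (hammingDist_comm D D' ▸ hadj))
  rw [← exp_add, add_halves, ← hZ, ← hZ, ← hμ, ← hμ] at hle
  exact hle B

/-- Exponential mechanism (McSherry–Talwar): if the objective `ℓ` has finite sensitivity `Δ`
over adjacent databases (ν-a.e. in `θ`), and the normalizing integrals are finite and positive,
then the mechanism with density proportional to `exp(-(ε/(2Δ)) ℓ(θ,D))` w.r.t. `ν`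
satisfies `ε`-differential privacy. -/
theorem exponential_mechanism_DP
    {Θ : Type*} [MeasurableSpace Θ] (ν : Measure Θ) [SigmaFinite ν]
    {𝒟 : Type*} [DecidableEq 𝒟] {n : ℕ}
    (ℓ : Θ → (Fin n → 𝒟) → ℝ)
    (hmeas : ∀ D, Measurable (fun θ => ℓ θ D))
    (ε Δ : ℝ) (hε : 0 < ε) (hΔ : 0 < Δ)
    (hsens : ∀ D D' : Fin n → 𝒟, hammingDist D D' = 1 →
      ∀ᵐ θ ∂ν, |ℓ θ D - ℓ θ D'| ≤ Δ)
    (Z : (Fin n → 𝒟) → ℝ)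
    (hZ : ∀ D, Z D = ∫ θ, exp (-(ε / (2 * Δ)) * ℓ θ D) ∂ν)
    (hZint : ∀ D, Integrable (fun θ => exp (-(ε / (2 * Δ)) * ℓ θ D)) ν)
    (hZpos : ∀ D, 0 < Z D)
    (μ : (Fin n → 𝒟) → Measure Θ)
    (hμ : ∀ D, μ D = ν.withDensity
      (fun θ => ENNReal.ofReal (exp (-(ε / (2 * Δ)) * ℓ θ D) / Z D))) :
    ∀ D D' : Fin n → 𝒟, hammingDist D D' = 1 →
      ∀ B : Set Θ, MeasurableSet B →
        μ D B ≤ ENNReal.ofReal (exp ε) * μ D' B :=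
  exponential_mechanism_DP_general ν ℓ ε Δ hε hΔ hsens Z hZ hZint hZpos μ hμ
end

section
/- Let Θ ⊆ ℝ^d be convex, ‖·‖ a norm on ℝ^d, ν a σ-finite measure on Θ, and {ℓ(·;D)} a family of functions differentiable ν-a.e. with gradient sensitivity Δ(θ): ‖∇ℓ(θ;D) − ∇ℓ(θ;D')‖ ≤ Δ(θ) for all adjacent D, D' and ν-a.e. θ. If ∫ exp(−(ε/(2Δ(θ)))‖∇ℓ(θ;D)‖) dν(θ) is finite and positive for all D, then the mechanism with density f_D(θ) ∝ exp(−(ε/(2Δ(θ)))‖∇ℓ(θ;D)‖) with respect to ν satisfies ε-differential privacy. -/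
open MeasureTheory Real

/-- The K-Norm Gradient (KNG) mechanism satisfies `ε`-differential privacy: if the gradients of
the objectives `ℓ(·;D)` (which exist ν-a.e.) have sensitivity `Δ(θ)` in an arbitrary norm `N`
on `ℝ^d` over adjacent databases, and the normalizing integrals are finite and positive, then
the mechanism with density proportional to `exp(-(ε/(2Δ(θ))) N(∇ℓ(θ;D)))` w.r.t. `ν` is `ε`-DP. -/
theorem KNG_mechanism_DP
    {d : ℕ} {𝒟 : Type*} [DecidableEq 𝒟] {n : ℕ}
    (Θ : Set (EuclideanSpace ℝ (Fin d))) (hΘ : Convex ℝ Θ)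
    (N : EuclideanSpace ℝ (Fin d) → ℝ)
    (hN0 : ∀ x, N x = 0 ↔ x = 0)
    (hNsmul : ∀ (a : ℝ) x, N (a • x) = |a| * N x)
    (hNadd : ∀ x y, N (x + y) ≤ N x + N y)
    (ν : Measure (EuclideanSpace ℝ (Fin d))) [SigmaFinite ν]
    (hνΘ : ν Θᶜ = 0)
    (ℓ : EuclideanSpace ℝ (Fin d) → (Fin n → 𝒟) → ℝ)
    (hdiff : ∀ D, ∀ᵐ θ ∂ν, DifferentiableAt ℝ (fun x => ℓ x D) θ)
    (ε : ℝ) (hε : 0 < ε)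
    (Δ : EuclideanSpace ℝ (Fin d) → ℝ) (hΔpos : ∀ θ, 0 < Δ θ)
    (hsens : ∀ D D' : Fin n → 𝒟, hammingDist D D' = 1 →
      ∀ᵐ θ ∂ν, N (gradient (fun x => ℓ x D) θ - gradient (fun x => ℓ x D') θ) ≤ Δ θ)
    (Z : (Fin n → 𝒟) → ℝ)
    (hZ : ∀ D, Z D = ∫ θ, exp (-(ε / (2 * Δ θ)) * N (gradient (fun x => ℓ x D) θ)) ∂ν)
    (hZint : ∀ D, Integrable
      (fun θ => exp (-(ε / (2 * Δ θ)) * N (gradient (fun x => ℓ x D) θ))) ν)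
    (hZpos : ∀ D, 0 < Z D)
    (μ : (Fin n → 𝒟) → Measure (EuclideanSpace ℝ (Fin d)))
    (hμ : ∀ D, μ D = ν.withDensity (fun θ =>
      ENNReal.ofReal (exp (-(ε / (2 * Δ θ)) * N (gradient (fun x => ℓ x D) θ)) / Z D))) :
    ∀ D D' : Fin n → 𝒟, hammingDist D D' = 1 →
      ∀ B : Set (EuclideanSpace ℝ (Fin d)), MeasurableSet B →
        μ D B ≤ ENNReal.ofReal (exp ε) * μ D' B := by

  intro D D' hadj B hB
  set f : (Fin n → 𝒟) → EuclideanSpace ℝ (Fin d) → ℝ :=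
    fun D θ => exp (-(ε / (2 * Δ θ)) * N (gradient (fun x => ℓ x D) θ)) with hf
  have hNneg : ∀ x, N (-x) = N x := by
    intro x
    have := hNsmul (-1) x
    simpa using this
  -- pointwise bounds a.e.
  have hae : ∀ᵐ θ ∂ν, f D θ ≤ exp (ε/2) * f D' θ ∧ f D' θ ≤ exp (ε/2) * f D θ := by
    filter_upwards [hsens D D' hadj] with θ hθ
    set a := N (gradient (fun x => ℓ x D) θ) with ha
    set b := N (gradient (fun x => ℓ x D') θ) with hb
    have hab : a ≤ b + Δ θ := by
      have h1 := hNadd (gradient (fun x => ℓ x D) θ - gradient (fun x => ℓ x D') θ)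
        (gradient (fun x => ℓ x D') θ)
      simpa [ha, hb, sub_add_cancel, add_comm] using h1.trans (by linarith)
    have hba : b ≤ a + Δ θ := by
      have h1 := hNadd (gradient (fun x => ℓ x D') θ - gradient (fun x => ℓ x D) θ)
        (gradient (fun x => ℓ x D) θ)
      have h2 : N (gradient (fun x => ℓ x D') θ - gradient (fun x => ℓ x D) θ) ≤ Δ θ := by
        have := hNneg (gradient (fun x => ℓ x D) θ - gradient (fun x => ℓ x D') θ)
        rw [neg_sub] at this
        linarith [hθ, this.ge, this.le]
      simpa [ha, hb, sub_add_cancel, add_comm] using h1.trans (by linarith)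
    have hΔ := hΔpos θ
    have hc : (0:ℝ) ≤ ε / (2 * Δ θ) := by positivity
    have key : ∀ u v : ℝ, v ≤ u + Δ θ →
        exp (-(ε / (2 * Δ θ)) * u) ≤ exp (ε/2) * exp (-(ε / (2 * Δ θ)) * v) := by
      intro u v huv
      rw [← Real.exp_add]
      apply Real.exp_le_exp.mpr
      have hcd : ε / (2 * Δ θ) * Δ θ = ε / 2 := by
        field_simp
      nlinarith [mul_le_mul_of_nonneg_left huv hc]
    exact ⟨key a b hba, key b a hab⟩
  -- normalizing constants
  have hZZ : Z D' ≤ exp (ε/2) * Z D := by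
    rw [hZ D', hZ D, ← MeasureTheory.integral_const_mul]
    refine integral_mono_ae (hZint D') ((hZint D).const_mul _) ?_
    filter_upwards [hae] with θ hθ using hθ.2
  -- density comparison
  have hdens : ∀ᵐ θ ∂ν, f D θ / Z D ≤ exp ε * (f D' θ / Z D') := by
    filter_upwards [hae] with θ hθ
    have h1 := hθ.1
    have hZD := hZpos D
    have hZD' := hZpos D'
    have hfpos : 0 < f D' θ := Real.exp_pos _
    have hfpos2 : 0 < f D θ := Real.exp_pos _
    have hee : exp (ε/2) * exp (ε/2) = exp ε := by
      rw [← Real.exp_add]; ring_nf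
    rw [mul_div_assoc', div_le_div_iff₀ hZD hZD']
    have h2 : (exp (ε/2) * f D' θ) * (exp (ε/2) * Z D) = exp ε * f D' θ * Z D := by
      rw [← hee]; ring
    have h3 := mul_le_mul h1 hZZ (le_of_lt hZD')
      (by positivity : (0:ℝ) ≤ exp (ε/2) * f D' θ)
    linarith [h2 ▸ h3]
  -- conclude
  rw [hμ D, hμ D', withDensity_apply _ hB, withDensity_apply _ hB,
    ← MeasureTheory.lintegral_const_mul' _ _ ENNReal.ofReal_ne_top]
  refine lintegral_mono_ae ?_
  refine (ae_restrict_of_ae ?_)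
  filter_upwards [hdens] with θ hθ
  calc ENNReal.ofReal (f D θ / Z D) ≤ ENNReal.ofReal (exp ε * (f D' θ / Z D')) :=
        ENNReal.ofReal_le_ofReal hθ
    _ = ENNReal.ofReal (exp ε) * ENNReal.ofReal (f D' θ / Z D') :=
        ENNReal.ofReal_mul (le_of_lt (Real.exp_pos ε))
end
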